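/- Let Q : ℝ^{2×2}_sym → ℝ be a quadratic form, represented by a tensor C ∈ ℝ^{2×2×2×2} via Q(A) = Σ_{i,j,k,l} C_{ijkl} A_{ij} A_{kl}. Let ψ : ω → ℝ³ be a C² isometric immersion with unit normal n[ψ]. Then at every point, Q(D²ψ · n[ψ]) = Σ_{m=1}^{3} Q(D²ψ_m), where D²ψ · n[ψ] denotes the 2×2 matrix with entries ∂ᵢ∂ⱼψ · n[ψ], and ψ_m are the components of ψ. -/

import Mathlib

open Matrix

/-- Partial derivative `∂ᵢψ(x)` of a map `ψ : ℝ² → ℝ³`. -/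
noncomputable def pd (ψ : (Fin 2 → ℝ) → (Fin 3 → ℝ)) (i : Fin 2) (x : Fin 2 → ℝ) : Fin 3 → ℝ :=
  fderiv ℝ ψ x (Pi.single i 1)

/-- Second partial derivative `∂ᵢ∂ⱼψ(x)`. -/
noncomputable def pd2 (ψ : (Fin 2 → ℝ) → (Fin 3 → ℝ)) (i j : Fin 2) (x : Fin 2 → ℝ) : Fin 3 → ℝ :=
  fderiv ℝ (pd ψ j) x (Pi.single i 1)

/-- Unit normal `n[ψ] = ∂₁ψ × ∂₂ψ`. -/
noncomputable def nrm (ψ : (Fin 2 → ℝ) → (Fin 3 → ℝ)) (x : Fin 2 → ℝ) : Fin 3 → ℝ :=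
  crossProduct (pd ψ 0 x) (pd ψ 1 x)

/-- A quadratic form on 2×2 matrices given by a 4-tensor `C`:
`Q(A) = Σ_{i,j,k,l} C_{ijkl} A_{ij} A_{kl}`. -/
def quadForm (C : Fin 2 → Fin 2 → Fin 2 → Fin 2 → ℝ)
    (A : Matrix (Fin 2) (Fin 2) ℝ) : ℝ :=
  ∑ i, ∑ j, ∑ k, ∑ l, C i j k l * A i j * A k l

/-! Differentiating `∂ᵢψ ⬝ ∂ⱼψ = δᵢⱼ` shows that `∂ᵢ∂ⱼψ ⬝ ∂ₖψ` is antisymmetric in `j, k`; it is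
symmetric in `i, j` by Schwarz, hence zero. So every `∂ᵢ∂ⱼψ` is parallel to the unit normal `n`,
whence `∂ᵢ∂ⱼψ ⬝ ∂ₖ∂ₗψ = (∂ᵢ∂ⱼψ ⬝ n)(∂ₖ∂ₗψ ⬝ n)`, and summing `Q` over the three components of `ψ`
expands into exactly these dot products. -/

open Filter Topology

theorem fderiv_dotProduct_apply {E ι : Type*} [NormedAddCommGroup E] [NormedSpace ℝ E]
    [Fintype ι] {f g : E → ι → ℝ} {x : E} (hf : DifferentiableAt ℝ f x)
    (hg : DifferentiableAt ℝ g x) (v : E) :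
    fderiv ℝ (fun y => f y ⬝ᵥ g y) x v = fderiv ℝ f x v ⬝ᵥ g x + f x ⬝ᵥ fderiv ℝ g x v := by
  have hfm := differentiableAt_pi.1 hf
  have hgm := differentiableAt_pi.1 hg
  simp only [dotProduct]
  rw [fderiv_fun_sum (A := fun m y => f y m * g y m) fun m _ => (hfm m).mul (hgm m)]
  simp [fderiv_fun_mul (hfm _) (hgm _), fderiv_apply hf, fderiv_apply hg,
    Finset.sum_add_distrib, add_comm, mul_comm]

theorem eq_zero_of_symm_of_antisymm {ι M : Type*} [AddCommGroup M] [IsAddTorsionFree M]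
    {s : ι → ι → ι → M} (hsymm : ∀ i j k, s i j k = s j i k)
    (hanti : ∀ i j k, s k i j + s k j i = 0) (i j k : ι) : s i j k = 0 := by
  have h : ∀ i j k, s k i j = - s k j i := fun i j k => eq_neg_of_add_eq_zero_left (hanti i j k)
  have : s i j k = - s i j k := calc
    s i j k = - s i k j := h ..
    _ = - s k i j := by rw [hsymm]
    _ = s k j i := by rw [h, neg_neg]
    _ = s j k i := hsymm ..
    _ = - s j i k := h ..
    _ = - s i j k := by rw [hsymm]
  exact self_eq_neg.mp this

theorem sum_quadForm_apply {ι : Type*} [Fintype ι] (C : Fin 2 → Fin 2 → Fin 2 → Fin 2 → ℝ)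
    (a : Fin 2 → Fin 2 → ι → ℝ) :
    ∑ m, quadForm C (of fun i j => a i j m) =
      ∑ i, ∑ j, ∑ k, ∑ l, C i j k l * (a i j ⬝ᵥ a k l) := by
  simp only [quadForm, of_apply, dotProduct, Finset.mul_sum, mul_assoc]
  rw [Finset.sum_comm]; congr! 2 with i
  rw [Finset.sum_comm]; congr! 2 with j
  rw [Finset.sum_comm]; congr! 2 with k
  rw [Finset.sum_comm]

theorem dotProduct_eq_mul_of_orthonormal {R : Type*} [CommRing R] {t : Fin 2 → Fin 3 → R}
    (ht : ∀ i j, t i ⬝ᵥ t j = if i = j then 1 else 0) {v w : Fin 3 → R}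
    (hv : ∀ i, v ⬝ᵥ t i = 0) :
    v ⬝ᵥ w = (v ⬝ᵥ t 0 ⨯₃ t 1) * (w ⬝ᵥ t 0 ⨯₃ t 1) := by
  have hnorm : t 0 ⨯₃ t 1 ⬝ᵥ t 0 ⨯₃ t 1 = 1 := by simp [cross_dot_cross, ht]
  have hvn : v ⨯₃ (t 0 ⨯₃ t 1) = 0 := by
    simp [cross_cross_eq_smul_sub_smul', hv, dotProduct_comm (t 0) v]
  have := cross_dot_cross v (t 0 ⨯₃ t 1) w (t 0 ⨯₃ t 1)
  rw [hvn, zero_dotProduct, hnorm, dotProduct_comm (t 0 ⨯₃ t 1) w] at this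
  linear_combination -this

section

variable {ψ : (Fin 2 → ℝ) → Fin 3 → ℝ} {x : Fin 2 → ℝ}

theorem differentiableAt_pd (hψ : ContDiffAt ℝ 2 ψ x) (i : Fin 2) :
    DifferentiableAt ℝ (pd ψ i) x :=
  ((hψ.fderiv_right le_rfl).differentiableAt one_ne_zero).clm_apply (differentiableAt_const _)

theorem pd2_eq_fderiv_fderiv (hψ : ContDiffAt ℝ 2 ψ x) (i j : Fin 2) :
    pd2 ψ i j x = fderiv ℝ (fderiv ℝ ψ) x (Pi.single i 1) (Pi.single j 1) := by
  unfold pd2 pd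
  rw [fderiv_clm_apply ((hψ.fderiv_right le_rfl).differentiableAt one_ne_zero)
    (differentiableAt_const _)]
  simp

theorem pd2_comm (hψ : ContDiffAt ℝ 2 ψ x) (i j : Fin 2) : pd2 ψ i j x = pd2 ψ j i x := by
  rw [pd2_eq_fderiv_fderiv hψ, pd2_eq_fderiv_fderiv hψ, (hψ.isSymmSndFDerivAt (by simp)).eq]

theorem pd2_dotProduct_pd_add_pd_dotProduct_pd2_eq_zero (hψ : ContDiffAt ℝ 2 ψ x)
    {g : Fin 2 → Fin 2 → ℝ} (hg : ∀ᶠ y in 𝓝 x, ∀ i j, pd ψ i y ⬝ᵥ pd ψ j y = g i j)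
    (i j k : Fin 2) : pd2 ψ k i x ⬝ᵥ pd ψ j x + pd ψ i x ⬝ᵥ pd2 ψ k j x = 0 := by
  have hconst : (fun y => pd ψ i y ⬝ᵥ pd ψ j y) =ᶠ[𝓝 x] fun _ => g i j :=
    hg.mono fun y hy => hy i j
  have := DFunLike.congr_fun (hconst.fderiv_eq (𝕜 := ℝ)) (Pi.single k 1)
  simpa [pd2, fderiv_dotProduct_apply (differentiableAt_pd hψ i) (differentiableAt_pd hψ j)]
    using this

theorem pd2_dotProduct_pd_eq_zero (hψ : ContDiffAt ℝ 2 ψ x)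
    {g : Fin 2 → Fin 2 → ℝ} (hg : ∀ᶠ y in 𝓝 x, ∀ i j, pd ψ i y ⬝ᵥ pd ψ j y = g i j)
    (i j k : Fin 2) : pd2 ψ i j x ⬝ᵥ pd ψ k x = 0 :=
  eq_zero_of_symm_of_antisymm (s := fun i j k => pd2 ψ i j x ⬝ᵥ pd ψ k x)
    (fun i j _ => by rw [pd2_comm hψ i j])
    (fun i j k => by
      simpa [dotProduct_comm (pd ψ i x)]
        using pd2_dotProduct_pd_add_pd_dotProduct_pd2_eq_zero hψ hg i j k)
    i j k

end

theorem stmt2 (ω : Set (Fin 2 → ℝ)) (hω : IsOpen ω)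
    (C : Fin 2 → Fin 2 → Fin 2 → Fin 2 → ℝ)
    (ψ : (Fin 2 → ℝ) → (Fin 3 → ℝ)) (hψ : ContDiffOn ℝ 2 ψ ω)
    (hiso : ∀ x ∈ ω, ∀ i j : Fin 2,
      pd ψ i x ⬝ᵥ pd ψ j x = if i = j then 1 else 0) :
    ∀ x ∈ ω,
      quadForm C (Matrix.of fun i j => pd2 ψ i j x ⬝ᵥ nrm ψ x) =
        ∑ m : Fin 3, quadForm C (Matrix.of fun i j => pd2 ψ i j x m) := by
  intro x hx
  have hψx : ContDiffAt ℝ 2 ψ x := hψ.contDiffAt (hω.mem_nhds hx)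
  have htan := pd2_dotProduct_pd_eq_zero hψx (eventually_of_mem (hω.mem_nhds hx) hiso)
  have hnormal : ∀ i j k l, pd2 ψ i j x ⬝ᵥ pd2 ψ k l x =
      (pd2 ψ i j x ⬝ᵥ nrm ψ x) * (pd2 ψ k l x ⬝ᵥ nrm ψ x) :=
    fun i j _ _ => dotProduct_eq_mul_of_orthonormal (hiso x hx) (htan i j)
  rw [sum_quadForm_apply]
  simp only [quadForm, of_apply, hnormal, mul_assoc]
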